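/- arXiv:0810.1715 — 10 statements merged into one kernel-verified Lean document; each statement's English description precedes it below -/
import Mathlib

section
/- If c ∈ ℚ is such that f_c(x) = x² + c admits four distinct rational second pre-images of the origin (i.e., the equation (x²+c)²+c = 0 has four distinct rational solutions), then there exists t ∈ ℚ with t ∉ {0, 1, -1} such that c = -(t²+1)⁴ / (16 t² (t²-1)²). -/
/-!
Each of the four pre-images `x` satisfies `x² + c = ±y` with `y² = -c`. Three distinct `x` cannot
share the same `x²`, so both signs occur: `a² + c = y`, `b² + c = -y` with `y ≠ 0`. Then
`(u, v) = (a / y, b / y)` is a rational point on the circle `u² + v² = 2` with `(u² - v²) y = 2`.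
Parametrizing the circle by the slope `t` of the line through `(1, 1)` expresses `y`, and hence
`c = -y²`, as a rational function of `t`.
-/

section Domain

variable {R : Type*} [CommRing R] [IsDomain R]

theorem sq_ne_sq_or_sq_ne_sq_of_ne {x₁ x₂ x₃ : R} (h12 : x₁ ≠ x₂) (h13 : x₁ ≠ x₃)
    (h23 : x₂ ≠ x₃) : x₁ ^ 2 ≠ x₂ ^ 2 ∨ x₁ ^ 2 ≠ x₃ ^ 2 := by
  by_contra! ⟨h2, h3⟩
  rw [eq_comm, sq_eq_sq_iff_eq_or_eq_neg] at h2 h3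
  rcases h2 with h2 | h2
  · exact h12 h2.symm
  rcases h3 with h3 | h3
  · exact h13 h3.symm
  exact h23 (h2.trans h3.symm)

theorem sq_add_eq_neg_of_sq_ne {c p q : R} (hp : (p ^ 2 + c) ^ 2 + c = 0)
    (hq : (q ^ 2 + c) ^ 2 + c = 0) (hpq : p ^ 2 ≠ q ^ 2) :
    p ^ 2 + c ≠ 0 ∧ q ^ 2 + c = -(p ^ 2 + c) := by
  have hsum : q ^ 2 + c = -(p ^ 2 + c) := by
    have h : ((p ^ 2 + c) - (q ^ 2 + c)) * ((p ^ 2 + c) + (q ^ 2 + c)) = 0 := by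
      linear_combination hp - hq
    rcases mul_eq_zero.mp h with h | h
    · exact absurd (by linear_combination h) hpq
    · linear_combination h
  refine ⟨fun hp0 => hpq ?_, hsum⟩
  linear_combination 2 * hp0 - hsum

theorem exists_sq_add_eq_and_sq_add_eq_neg {c x₁ x₂ x₃ : R} (h12 : x₁ ≠ x₂) (h13 : x₁ ≠ x₃)
    (h23 : x₂ ≠ x₃) (e1 : (x₁ ^ 2 + c) ^ 2 + c = 0) (e2 : (x₂ ^ 2 + c) ^ 2 + c = 0)
    (e3 : (x₃ ^ 2 + c) ^ 2 + c = 0) :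
    ∃ a b y : R, y ≠ 0 ∧ a ^ 2 + c = y ∧ b ^ 2 + c = -y ∧ c = -y ^ 2 := by
  have hc : c = -(x₁ ^ 2 + c) ^ 2 := by linear_combination e1
  rcases sq_ne_sq_or_sq_ne_sq_of_ne h12 h13 h23 with hne | hne
  · obtain ⟨hy, hb⟩ := sq_add_eq_neg_of_sq_ne e1 e2 hne
    exact ⟨x₁, x₂, _, hy, rfl, hb, hc⟩
  · obtain ⟨hy, hb⟩ := sq_add_eq_neg_of_sq_ne e1 e3 hne
    exact ⟨x₁, x₃, _, hy, rfl, hb, hc⟩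

end Domain

section Field

variable {K : Type*} [Field K]

theorem exists_circle_point_of_sq_add_eq {a b c y : K} (hy : y ≠ 0) (ha : a ^ 2 + c = y)
    (hb : b ^ 2 + c = -y) (hc : c = -y ^ 2) :
    ∃ u v : K, u ^ 2 + v ^ 2 = 2 ∧ u ≠ 1 ∧ (u ^ 2 - v ^ 2) * y = 2 := by
  refine ⟨a / y, b / y, ?_, ?_, ?_⟩
  · field_simp
    linear_combination ha + hb - 2 * hc
  · intro hu
    rw [div_eq_one_iff_eq hy] at hu
    subst hu
    exact hy (by linear_combination hc - ha)
  · field_simp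
    linear_combination ha - hb

/-- Rational parametrization of the circle `u² + v² = 2` by lines through `(1, 1)`. -/
theorem exists_slope_of_sq_add_sq_eq_two {u v : K} (huv : u ^ 2 + v ^ 2 = 2) (hu : u ≠ 1) :
    ∃ t : K, (t ^ 2 + 1) * u = t ^ 2 - 2 * t - 1 ∧ (t ^ 2 + 1) * v = -t ^ 2 - 2 * t + 1 := by
  have hu' : u - 1 ≠ 0 := sub_ne_zero.mpr hu
  set t := (v - 1) / (u - 1)
  have hv : v = t * (u - 1) + 1 := by rw [div_mul_cancel₀ _ hu']; ring
  have h : (u - 1) * ((t ^ 2 + 1) * u - (t ^ 2 - 2 * t - 1)) = 0 := by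
    linear_combination huv - (v + t * (u - 1) + 1) * hv
  have htu : (t ^ 2 + 1) * u = t ^ 2 - 2 * t - 1 :=
    sub_eq_zero.mp ((mul_eq_zero.mp h).resolve_left hu')
  exact ⟨t, htu, by linear_combination (t ^ 2 + 1) * hv + t * htu⟩

end Field

theorem eq_neg_div_of_mul_eq_of_eq_neg_sq {c t y : ℚ}
    (hty : -8 * t * (t ^ 2 - 1) * y = 2 * (t ^ 2 + 1) ^ 2) (hc : c = -y ^ 2) :
    t ≠ 0 ∧ t ≠ 1 ∧ t ≠ -1 ∧ c = -(t ^ 2 + 1) ^ 4 / (16 * t ^ 2 * (t ^ 2 - 1) ^ 2) := by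
  have hne : t * (t ^ 2 - 1) ≠ 0 := by
    intro h
    have : (t ^ 2 + 1) ^ 2 = 0 := by linear_combination (-4 * y) * h - hty / 2
    have : 0 < (t ^ 2 + 1) ^ 2 := by positivity
    linarith
  have ht0 : t ≠ 0 := left_ne_zero_of_mul hne
  have ht2 : t ^ 2 - 1 ≠ 0 := right_ne_zero_of_mul hne
  have ht1 : t ≠ 1 := by rintro rfl; norm_num at ht2
  have htm1 : t ≠ -1 := by rintro rfl; norm_num at ht2
  refine ⟨ht0, ht1, htm1, ?_⟩
  rw [hc]
  field_simp
  linear_combination (-1 / 4 * (-8 * t * (t ^ 2 - 1) * y + 2 * (t ^ 2 + 1) ^ 2)) * hty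

/-- If `f_c(x) = x² + c` admits four distinct rational second pre-images of the
origin, then `c = -(t²+1)⁴ / (16 t² (t²-1)²)` for some `t ∈ ℚ \ {0, 1, -1}`. -/
theorem stmt_1 (c : ℚ)
    (h : ∃ x₁ x₂ x₃ x₄ : ℚ, x₁ ≠ x₂ ∧ x₁ ≠ x₃ ∧ x₁ ≠ x₄ ∧ x₂ ≠ x₃ ∧ x₂ ≠ x₄ ∧ x₃ ≠ x₄ ∧
      (x₁ ^ 2 + c) ^ 2 + c = 0 ∧ (x₂ ^ 2 + c) ^ 2 + c = 0 ∧
      (x₃ ^ 2 + c) ^ 2 + c = 0 ∧ (x₄ ^ 2 + c) ^ 2 + c = 0) :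
    ∃ t : ℚ, t ≠ 0 ∧ t ≠ 1 ∧ t ≠ -1 ∧
      c = -(t ^ 2 + 1) ^ 4 / (16 * t ^ 2 * (t ^ 2 - 1) ^ 2) := by
  obtain ⟨x₁, x₂, x₃, -, h12, h13, -, h23, -, -, e1, e2, e3, -⟩ := h
  obtain ⟨a, b, y, hy, ha, hb, hc⟩ := exists_sq_add_eq_and_sq_add_eq_neg h12 h13 h23 e1 e2 e3
  obtain ⟨u, v, huv, hu1, huvy⟩ := exists_circle_point_of_sq_add_eq hy ha hb hc
  obtain ⟨t, hu, hv⟩ := exists_slope_of_sq_add_sq_eq_two huv hu1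
  have hty : -8 * t * (t ^ 2 - 1) * y = 2 * (t ^ 2 + 1) ^ 2 := by
    linear_combination (t ^ 2 + 1) ^ 2 * huvy
      - y * (((t ^ 2 + 1) * u + (t ^ 2 - 2 * t - 1)) * hu
        - ((t ^ 2 + 1) * v + (-t ^ 2 - 2 * t + 1)) * hv)
  exact ⟨t, eq_neg_div_of_mul_eq_of_eq_neg_sq hty hc⟩
end

section
/- For any t ∈ ℚ with t ∉ {0, 1, -1}, setting c = -(t²+1)⁴ / (16 t² (t²-1)²), the four rational numbers x = ε₁ (t²+1)(t² + 2ε₂t - 1) / (4t(t²-1)) for ε₁, ε₂ ∈ {1, -1} are distinct and satisfy (x²+c)² + c = 0. -/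
/-!
Put `m = t² - 1`, `n = 2t`, `s = t² + 1`, so that `s² = m² + n²`, and `a = s² / (2mn)`; then
`c = -a²` and the four numbers are `x = ε₁ (s / 2mn) (m + ε₂ n)`. Squaring and using the
Pythagorean relation gives `x² = a² + ε₂ a`, hence `x² + c = ε₂ a` and `(x² + c)² + c = 0`.
Distinctness reduces to `m, n, m + n, m - n ≠ 0`; the last two are `(t ± 1)² - 2`, which do not
vanish because `2` is not a rational square.
-/

theorem sq_add_sq_add_eq_zero {R : Type*} [CommRing R] {x a c ε : R} (hc : c = -a ^ 2)
    (hx : x ^ 2 = a ^ 2 + ε * a) (hε : ε ^ 2 = 1) : (x ^ 2 + c) ^ 2 + c = 0 := by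
  rw [hx, hc]
  linear_combination a ^ 2 * hε

theorem sq_div_mul_sign_mul_add_sign_mul {K : Type*} [Field K] {m n s ε₁ ε₂ : K}
    (hmn : 2 * m * n ≠ 0) (hs : s ^ 2 = m ^ 2 + n ^ 2) (h₁ : ε₁ ^ 2 = 1) (h₂ : ε₂ ^ 2 = 1) :
    (s / (2 * m * n) * (ε₁ * (m + ε₂ * n))) ^ 2 =
      (s ^ 2 / (2 * m * n)) ^ 2 + ε₂ * (s ^ 2 / (2 * m * n)) := by
  generalize hd : 2 * m * n = d at hmn ⊢
  field_simp
  linear_combination s ^ 2 * (m + ε₂ * n) ^ 2 * h₁ + s ^ 2 * n ^ 2 * h₂ - s ^ 2 * hs + s ^ 2 * ε₂ * hd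

theorem sign_mul_add_sign_mul_injective {K : Type*} [Field K] (h2 : (2 : K) ≠ 0)
    {a b ε₁ ε₂ ε₁' ε₂' : K} (ha : a ≠ 0) (hb : b ≠ 0) (hab : a + b ≠ 0) (hab' : a - b ≠ 0)
    (h₁ : ε₁ ^ 2 = 1) (h₂ : ε₂ ^ 2 = 1) (h₁' : ε₁' ^ 2 = 1) (h₂' : ε₂' ^ 2 = 1)
    (h : ε₁ * (a + ε₂ * b) = ε₁' * (a + ε₂' * b)) : ε₁ = ε₁' ∧ ε₂ = ε₂' := by
  have hε₂ : ε₂ = ε₂' := by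
    -- square `h` to eliminate `ε₁` and `ε₁'`
    have : 2 * a * b * (ε₂ - ε₂') = 0 := by
      linear_combination (ε₁ * (a + ε₂ * b) + ε₁' * (a + ε₂' * b)) * h
        - (a + ε₂ * b) ^ 2 * h₁ + (a + ε₂' * b) ^ 2 * h₁' - b ^ 2 * h₂ + b ^ 2 * h₂'
    simpa [sub_eq_zero, h2, ha, hb] using this
  subst hε₂
  have hne : a + ε₂ * b ≠ 0 := by
    rcases sq_eq_one_iff.1 h₂ with rfl | rfl
    · simpa using hab
    · simpa [← sub_eq_add_neg] using hab'
  exact ⟨mul_right_cancel₀ hne h, rfl⟩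

theorem rat_sq_ne_two (q : ℚ) : q ^ 2 ≠ 2 := fun h => by
  have : IsSquare (2 : ℚ) := ⟨q, by rw [← h, sq]⟩
  norm_num at this

/-- For `t ∈ ℚ \ {0, 1, -1}` and `c = -(t²+1)⁴/(16 t² (t²-1)²)`, the four numbers
`x = ε₁ (t²+1)(t² + 2 ε₂ t - 1)/(4 t (t²-1))` for `ε₁, ε₂ ∈ {1, -1}` are distinct
rational second pre-images of the origin under `f_c(x) = x² + c`. -/
theorem stmt_2 (t : ℚ) (ht0 : t ≠ 0) (ht1 : t ≠ 1) (ht2 : t ≠ -1) :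
    let c : ℚ := -(t ^ 2 + 1) ^ 4 / (16 * t ^ 2 * (t ^ 2 - 1) ^ 2)
    let X : ℚ → ℚ → ℚ := fun ε₁ ε₂ =>
      ε₁ * (t ^ 2 + 1) * (t ^ 2 + 2 * ε₂ * t - 1) / (4 * t * (t ^ 2 - 1))
    (∀ ε₁ ε₂ : ℚ, (ε₁ = 1 ∨ ε₁ = -1) → (ε₂ = 1 ∨ ε₂ = -1) →
        ((X ε₁ ε₂) ^ 2 + c) ^ 2 + c = 0) ∧
    (∀ ε₁ ε₂ ε₁' ε₂' : ℚ, (ε₁ = 1 ∨ ε₁ = -1) → (ε₂ = 1 ∨ ε₂ = -1) →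
        (ε₁' = 1 ∨ ε₁' = -1) → (ε₂' = 1 ∨ ε₂' = -1) →
        X ε₁ ε₂ = X ε₁' ε₂' → ε₁ = ε₁' ∧ ε₂ = ε₂') := by
  intro c X
  have hm : t ^ 2 - 1 ≠ 0 := fun h =>
    mul_ne_zero (sub_ne_zero.2 ht1) (sub_ne_zero.2 ht2) (by linear_combination h)
  have hn : 2 * t ≠ 0 := mul_ne_zero two_ne_zero ht0
  have hmn : 2 * (t ^ 2 - 1) * (2 * t) ≠ 0 := mul_ne_zero (mul_ne_zero two_ne_zero hm) hn
  have hc : c = -((t ^ 2 + 1) ^ 2 / (2 * (t ^ 2 - 1) * (2 * t))) ^ 2 := by simp only [c]; field_simp; ring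
  have hX : ∀ ε₁ ε₂, X ε₁ ε₂ =
      (t ^ 2 + 1) / (2 * (t ^ 2 - 1) * (2 * t)) * (ε₁ * ((t ^ 2 - 1) + ε₂ * (2 * t))) :=
    fun _ _ => by simp only [X]; ring
  constructor
  · intro ε₁ ε₂ h₁ h₂
    rw [← sq_eq_one_iff] at h₁ h₂
    rw [hX]
    exact sq_add_sq_add_eq_zero hc
      (sq_div_mul_sign_mul_add_sign_mul hmn (by ring) h₁ h₂) h₂
  · intro ε₁ ε₂ ε₁' ε₂' h₁ h₂ h₁' h₂' h
    rw [← sq_eq_one_iff] at h₁ h₂ h₁' h₂'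
    rw [hX, hX] at h
    refine sign_mul_add_sign_mul_injective two_ne_zero hm hn
      (fun h0 => rat_sq_ne_two (t + 1) (by linear_combination h0))
      (fun h0 => rat_sq_ne_two (t - 1) (by linear_combination h0)) h₁ h₂ h₁' h₂'
      (mul_left_cancel₀ (div_ne_zero (by positivity) hmn) h)
end

section
/- The affine curve in the (x,c)-plane defined by f_c³(x) = 0, i.e., ((x²+c)²+c)²+c = 0, is birational over ℚ to the elliptic curve v² = u³ - u + 1 via the map sending (u,v) with u ≠ ±1 to x = v/(u²-1), c = -1/(u²-1)². -/
/-!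
Put `d = u² - 1`, `x = v / d`, `c = -1 / d²`. The curve equation `v² - 1 = u d` says exactly
that `f_c(x) = u / d`; then `f_c²(x) = (u² - 1) / d² = 1 / d` and `f_c³(x) = 0`, and the inverse map
reads `(u, v)` back off `(f_c(x), f_c²(x)) = (u / d, 1 / d)`. Conversely, writing `A = f_c(x)` and
`B = f_c²(x)`, the relations `A² = B - c` and `B² = -c` give `(A / B)² - 1 = 1 / B`, from which the
curve equation and the inversion formulas follow.
-/

section

variable {K : Type*} [Field K]

theorem sq_sub_one_ne_zero_of_ne {u : K} (h1 : u ≠ 1) (h2 : u ≠ -1) : u ^ 2 - 1 ≠ 0 := by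
  rw [Ne, sub_eq_zero, sq_eq_one_iff]
  tauto

theorem div_sq_add_eq_of_curve {u v : K} (hE : v ^ 2 = u ^ 3 - u + 1) (hd : u ^ 2 - 1 ≠ 0) :
    (v / (u ^ 2 - 1)) ^ 2 + -1 / (u ^ 2 - 1) ^ 2 = u / (u ^ 2 - 1) := by
  field_simp
  linear_combination hE

theorem div_sq_add_eq_inv {u : K} (hd : u ^ 2 - 1 ≠ 0) :
    (u / (u ^ 2 - 1)) ^ 2 + -1 / (u ^ 2 - 1) ^ 2 = 1 / (u ^ 2 - 1) := by
  field_simp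
  ring

theorem iterate_of_curve {u v : K} (hE : v ^ 2 = u ^ 3 - u + 1) (h1 : u ≠ 1) (h2 : u ≠ -1) :
    let x : K := v / (u ^ 2 - 1)
    let c : K := -1 / (u ^ 2 - 1) ^ 2
    ((x ^ 2 + c) ^ 2 + c) ^ 2 + c = 0 ∧ (x ^ 2 + c) ^ 2 + c ≠ 0 ∧
      (x ^ 2 + c) / ((x ^ 2 + c) ^ 2 + c) = u ∧ x / ((x ^ 2 + c) ^ 2 + c) = v := by
  have hd := sq_sub_one_ne_zero_of_ne h1 h2
  dsimp only
  rw [div_sq_add_eq_of_curve hE hd, div_sq_add_eq_inv hd]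
  exact ⟨by field_simp; ring, one_div_ne_zero hd, by field_simp, by field_simp⟩

theorem sq_div_sub_one_eq_inv {x c : K} (h : ((x ^ 2 + c) ^ 2 + c) ^ 2 + c = 0)
    (hB : (x ^ 2 + c) ^ 2 + c ≠ 0) :
    ((x ^ 2 + c) / ((x ^ 2 + c) ^ 2 + c)) ^ 2 - 1 = 1 / ((x ^ 2 + c) ^ 2 + c) := by
  field_simp
  linear_combination -h

theorem curve_of_iterate {x c : K} (h : ((x ^ 2 + c) ^ 2 + c) ^ 2 + c = 0) (hc : c ≠ 0) :
    let u : K := (x ^ 2 + c) / ((x ^ 2 + c) ^ 2 + c)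
    let v : K := x / ((x ^ 2 + c) ^ 2 + c)
    v ^ 2 = u ^ 3 - u + 1 ∧ u ^ 2 - 1 ≠ 0 ∧
      v / (u ^ 2 - 1) = x ∧ -1 / (u ^ 2 - 1) ^ 2 = c := by
  have hB : (x ^ 2 + c) ^ 2 + c ≠ 0 := fun hB => hc (by simpa [hB] using h)
  dsimp only
  rw [show ∀ u : K, u ^ 3 - u + 1 = u * (u ^ 2 - 1) + 1 from fun u => by ring,
    sq_div_sub_one_eq_inv h hB]
  refine ⟨?_, one_div_ne_zero hB, by field_simp, ?_⟩
  · field_simp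
    linear_combination -h
  · field_simp
    linear_combination -h

end

/-- The affine curve `f_c³(x) = 0` is birational over `ℚ` to the elliptic curve
`v² = u³ - u + 1`: the maps `(u,v) ↦ (x,c) = (v/(u²-1), -1/(u²-1)²)` and
`(x,c) ↦ (u,v) = (f_c(x)/f_c²(x), x/f_c²(x))` are mutually inverse rational maps. -/
theorem stmt_5 :
    (∀ u v : ℚ, v ^ 2 = u ^ 3 - u + 1 → u ≠ 1 → u ≠ -1 →
      let x : ℚ := v / (u ^ 2 - 1)
      let c : ℚ := -1 / (u ^ 2 - 1) ^ 2
      ((x ^ 2 + c) ^ 2 + c) ^ 2 + c = 0 ∧ (x ^ 2 + c) ^ 2 + c ≠ 0 ∧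
        (x ^ 2 + c) / ((x ^ 2 + c) ^ 2 + c) = u ∧ x / ((x ^ 2 + c) ^ 2 + c) = v) ∧
    (∀ x c : ℚ, ((x ^ 2 + c) ^ 2 + c) ^ 2 + c = 0 → c ≠ 0 →
      let u : ℚ := (x ^ 2 + c) / ((x ^ 2 + c) ^ 2 + c)
      let v : ℚ := x / ((x ^ 2 + c) ^ 2 + c)
      v ^ 2 = u ^ 3 - u + 1 ∧ u ^ 2 - 1 ≠ 0 ∧
        v / (u ^ 2 - 1) = x ∧ -1 / (u ^ 2 - 1) ^ 2 = c) :=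
  ⟨fun _ _ hE h1 h2 => iterate_of_curve hE h1 h2, fun _ _ h hc => curve_of_iterate h hc⟩
end

section
/- If (u,v) ∈ ℚ² satisfies v² = u³ - u + 1 and u ≠ ±1, then setting c = -1/(u²-1)² and x = v/(u²-1), one has ((x²+c)²+c)² + c = 0. -/
/-! The orbit of `x` under `f_c` is explicit. Put `d = u² - 1`, so `c = -1/d²`. The curve equation
says `x² = (u³ - u + 1)/d²`, hence `f_c(x) = (u³ - u)/d² = u/d`; then
`f_c(u/d) = (u² - 1)/d² = 1/d` and `f_c(1/d) = 0`. -/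

theorem sq_sub_one_ne_zero {R : Type*} [Ring R] [NoZeroDivisors R] {u : R} (h1 : u ≠ 1)
    (h2 : u ≠ -1) : u ^ 2 - 1 ≠ 0 := by
  rw [sub_ne_zero, Ne, sq_eq_one_iff]
  tauto

section QuadraticOrbit

variable {K : Type*} [Field K] {u : K}

theorem sq_add_neg_one_div_sq_eq_div (hu : u ^ 2 - 1 ≠ 0) {x : K}
    (hx : x ^ 2 = (u ^ 3 - u + 1) / (u ^ 2 - 1) ^ 2) :
    x ^ 2 + -1 / (u ^ 2 - 1) ^ 2 = u / (u ^ 2 - 1) := by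
  rw [hx]
  field_simp
  ring

theorem div_sq_add_neg_one_div_sq_eq_one_div (hu : u ^ 2 - 1 ≠ 0) :
    (u / (u ^ 2 - 1)) ^ 2 + -1 / (u ^ 2 - 1) ^ 2 = 1 / (u ^ 2 - 1) := by
  field_simp
  ring

theorem one_div_sq_add_neg_one_div_sq (d : K) : (1 / d) ^ 2 + -1 / d ^ 2 = 0 := by
  ring

end QuadraticOrbit

/-- If `(u,v) ∈ ℚ²` satisfies `v² = u³ - u + 1` and `u ≠ ±1`, then with
`c = -1/(u²-1)²` and `x = v/(u²-1)` one has `((x²+c)²+c)² + c = 0`. -/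
theorem stmt_6 (u v : ℚ) (h : v ^ 2 = u ^ 3 - u + 1) (h1 : u ≠ 1) (h2 : u ≠ -1) :
    let c : ℚ := -1 / (u ^ 2 - 1) ^ 2
    let x : ℚ := v / (u ^ 2 - 1)
    ((x ^ 2 + c) ^ 2 + c) ^ 2 + c = 0 := by
  intro c x
  have hu := sq_sub_one_ne_zero h1 h2
  have hx : x ^ 2 = (u ^ 3 - u + 1) / (u ^ 2 - 1) ^ 2 := by rw [div_pow, h]
  rw [sq_add_neg_one_div_sq_eq_div hu hx, div_sq_add_neg_one_div_sq_eq_one_div hu,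
    one_div_sq_add_neg_one_div_sq]
end

section
/- If (x, c) ∈ ℚ² satisfies f_c³(x) = 0 with c ≠ 0, then u = f_c(x)/f_c²(x) and v = x/f_c²(x) are well-defined (f_c²(x) ≠ 0) and satisfy v² = u³ - u + 1. -/
/-!
Writing `z = f_c(x)` and `y = f_c²(x)`, the hypothesis `f_c(y) = 0` says `c = -y²`, which rules out
`y = 0` when `c ≠ 0`. Substituting `c = -y²` gives `x² = z + y²` and `z² = y + y²`, and with these
two relations `v² = u³ - u + 1` for `u = z / y`, `v = x / y` reduces to a polynomial identity.
-/

theorem ne_zero_of_sq_add_eq_zero {R : Type*} [Semiring R] {y c : R} (hc : c ≠ 0)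
    (h : y ^ 2 + c = 0) : y ≠ 0 := by
  rintro rfl
  simp_all

theorem div_sq_eq_div_cube_sub_div_add_one {K : Type*} [Field K] {x y z c : K}
    (hz : z = x ^ 2 + c) (hy : y = z ^ 2 + c) (h : y ^ 2 + c = 0) (hy0 : y ≠ 0) :
    (x / y) ^ 2 = (z / y) ^ 3 - z / y + 1 := by
  have hc : c = -y ^ 2 := by linear_combination h
  have hx : x ^ 2 = z + y ^ 2 := by linear_combination -hz - hc
  have hzy : z ^ 2 = y + y ^ 2 := by linear_combination -hy - hc
  field_simp
  linear_combination y * hx - z * hzy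

/-- If `(x, c) ∈ ℚ²` satisfies `f_c³(x) = 0` with `c ≠ 0`, then `f_c²(x) ≠ 0`, so
`u = f_c(x)/f_c²(x)` and `v = x/f_c²(x)` are well-defined, and `v² = u³ - u + 1`. -/
theorem stmt_7 (x c : ℚ) (h : ((x ^ 2 + c) ^ 2 + c) ^ 2 + c = 0) (hc : c ≠ 0) :
    (x ^ 2 + c) ^ 2 + c ≠ 0 ∧
      (x / ((x ^ 2 + c) ^ 2 + c)) ^ 2 =
        ((x ^ 2 + c) / ((x ^ 2 + c) ^ 2 + c)) ^ 3 -
          (x ^ 2 + c) / ((x ^ 2 + c) ^ 2 + c) + 1 := by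
  have hy := ne_zero_of_sq_add_eq_zero hc h
  exact ⟨hy, div_sq_eq_div_cube_sub_div_add_one rfl rfl h hy⟩
end

section
/- For any field k of characteristic ≠ 2 and integer N ≥ 2, the ring homomorphism ψ* : k[z₀, …, z_{N-1}] → k[x,c]/(f_c^N(x) - a) sending z_i ↦ f_c^i(x) is surjective, and its kernel is the ideal generated by the N-1 polynomials z_{N-1}² + z_i - z_{i-1}² - a for i = 1, …, N-1. -/
/-!
The relations say exactly that, with `c := a - z_{N-1}²`, one has `z_{i+1} = z_i² + c`; hence
`x ↦ z₀`, `c ↦ a - z_{N-1}²` sends `f_c^i(x)` to `z_i` for `i < N` and `f_c^N(x) = z_{N-1}² + c`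
to `a`. This map and the one induced by `ψ*` are mutually inverse isomorphisms between
`k[z]/(relations)` and `k[x,c]/(f_c^N(x) - a)`, which gives both surjectivity and the kernel.
-/

open MvPolynomial

theorem AlgHom.surjective_and_ker_eq_of_quotient_inverse {R A B : Type*} [CommRing R]
    [CommRing A] [Semiring B] [Algebra R A] [Algebra R B] (ψ : A →ₐ[R] B) {I : Ideal A}
    (hI : I ≤ RingHom.ker ψ) (φ : B →ₐ[R] A ⧸ I) (hφψ : φ.comp ψ = Ideal.Quotient.mkₐ R I)
    (hψφ : (Ideal.Quotient.liftₐ I ψ hI).comp φ = AlgHom.id R B) :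
    Function.Surjective ψ ∧ RingHom.ker ψ = I := by
  refine ⟨fun b => ?_, le_antisymm (fun p hp => ?_) hI⟩
  · obtain ⟨p, hp⟩ := Ideal.Quotient.mk_surjective (φ b)
    refine ⟨p, ?_⟩
    calc ψ p = Ideal.Quotient.liftₐ I ψ hI (Ideal.Quotient.mk I p) :=
          congr($(Ideal.Quotient.liftₐ_comp I ψ hI) p).symm
      _ = b := by rw [hp]; exact congr($hψφ b)
  · rw [← Ideal.Quotient.eq_zero_iff_mem]
    calc Ideal.Quotient.mk I p = φ (ψ p) := congr($hφψ p).symm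
      _ = 0 := by rw [hp, map_zero]

theorem map_iterate_sq_add {F A B : Type*} [Semiring A] [Semiring B] [FunLike F A B]
    [RingHomClass F A B] (f : F) (c x : A) (n : ℕ) :
    f ((fun p => p ^ 2 + c)^[n] x) = (fun p => p ^ 2 + f c)^[n] (f x) :=
  (Function.Semiconj.iterate_right (f := f) (fun p => by simp) n) x

theorem Fin.iterate_eq_of_succ_eq {α : Type*} {N : ℕ} (g : α → α) (z : Fin N → α)
    (hz : ∀ (i : ℕ) (hi : i + 1 < N), z ⟨i + 1, hi⟩ = g (z ⟨i, by omega⟩)) :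
    ∀ (i : ℕ) (hi : i < N), g^[i] (z ⟨0, by omega⟩) = z ⟨i, hi⟩
  | 0, _ => rfl
  | i + 1, hi => by
    rw [Function.iterate_succ_apply', Fin.iterate_eq_of_succ_eq g z hz i (by omega), hz]

namespace QuadraticPreimage

variable {k : Type*} [CommRing k]

variable (k) in
noncomputable def iter (n : ℕ) : MvPolynomial (Fin 2) k := (fun p => p ^ 2 + X 1)^[n] (X 0)

theorem iter_succ (n : ℕ) : iter k (n + 1) = iter k n ^ 2 + X 1 :=
  Function.iterate_succ_apply' _ _ _

theorem iter_of_one_le {N : ℕ} (hN : 1 ≤ N) : iter k N = iter k (N - 1) ^ 2 + X 1 := by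
  rw [← iter_succ, Nat.sub_add_cancel hN]

noncomputable def curveIdeal (a : k) (N : ℕ) : Ideal (MvPolynomial (Fin 2) k) :=
  Ideal.span {iter k N - C a}

noncomputable def coordMap (a : k) (N : ℕ) :
    MvPolynomial (Fin N) k →ₐ[k] MvPolynomial (Fin 2) k ⧸ curveIdeal a N :=
  aeval fun i => Ideal.Quotient.mk _ (iter k i)

variable (a : k) {N : ℕ} (hN : 1 ≤ N)

noncomputable def relation (i : Fin (N - 1)) : MvPolynomial (Fin N) k :=
  X (⟨N - 1, by omega⟩ : Fin N) ^ 2 + X ⟨i + 1, by omega⟩ - X ⟨i, by omega⟩ ^ 2 - C a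

noncomputable def relationIdeal : Ideal (MvPolynomial (Fin N) k) :=
  Ideal.span (Set.range (relation a hN))

noncomputable def invMap :
    MvPolynomial (Fin 2) k →ₐ[k] MvPolynomial (Fin N) k ⧸ relationIdeal a hN :=
  aeval ![Ideal.Quotient.mk _ (X ⟨0, by omega⟩),
    Ideal.Quotient.mk _ (C a - X ⟨N - 1, by omega⟩ ^ 2)]

theorem invMap_X_zero : invMap a hN (X 0) = Ideal.Quotient.mk _ (X ⟨0, by omega⟩) :=
  aeval_X _ _

theorem invMap_X_one :
    invMap a hN (X 1) = Ideal.Quotient.mk _ (C a - X ⟨N - 1, by omega⟩ ^ 2) :=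
  aeval_X _ _

theorem invMap_iter (i : ℕ) (hi : i < N) :
    invMap a hN (iter k i) = Ideal.Quotient.mk (relationIdeal a hN) (X ⟨i, hi⟩) := by
  rw [iter, map_iterate_sq_add, invMap_X_zero, invMap_X_one]
  refine Fin.iterate_eq_of_succ_eq _ (fun j => Ideal.Quotient.mk _ (X j)) (fun j hj => ?_) i hi
  rw [← map_pow, ← map_add, Ideal.Quotient.eq]
  have : relation a hN ⟨j, by omega⟩ ∈ relationIdeal a hN := Ideal.subset_span ⟨_, rfl⟩
  convert this using 1
  simp only [relation]
  ring

theorem invMap_iter_sub_C : invMap a hN (iter k N - C a) = 0 := by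
  rw [map_sub, iter_of_one_le hN, map_add, map_pow, invMap_iter a hN (N - 1) (by omega),
    invMap_X_one, ← map_pow, ← map_add, add_sub_cancel, algHom_C, ← algebraMap_eq,
    Ideal.Quotient.mk_algebraMap, sub_self]

theorem coordMap_X (i : Fin N) : coordMap a N (X i) = Ideal.Quotient.mk _ (iter k i) :=
  aeval_X _ _

theorem coordMap_apply (p : MvPolynomial (Fin N) k) :
    coordMap a N p = Ideal.Quotient.mk _ (aeval (fun i : Fin N => iter k i) p) := by
  rw [← Ideal.Quotient.mkₐ_eq_mk k, ← AlgHom.comp_apply, comp_aeval]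
  rfl

theorem coordMap_relation (i : Fin (N - 1)) : coordMap a N (relation a hN i) = 0 := by
  have heval : aeval (fun j : Fin N => iter k j) (relation a hN i) = iter k N - C a := by
    simp only [relation, map_sub, map_add, map_pow, aeval_X, aeval_C, algebraMap_eq]
    rw [iter_of_one_le hN, iter_succ]
    ring
  rw [coordMap_apply, Ideal.Quotient.eq_zero_iff_mem, heval]
  exact Ideal.mem_span_singleton_self _

theorem relationIdeal_le_ker : relationIdeal a hN ≤ RingHom.ker (coordMap a N) :=
  Ideal.span_le.mpr (Set.range_subset_iff.mpr (coordMap_relation a hN))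

noncomputable def coordMapQuot :
    (MvPolynomial (Fin N) k ⧸ relationIdeal a hN) →ₐ[k] MvPolynomial (Fin 2) k ⧸ curveIdeal a N :=
  Ideal.Quotient.liftₐ _ (coordMap a N) (relationIdeal_le_ker a hN)

theorem coordMapQuot_mk (p : MvPolynomial (Fin N) k) :
    coordMapQuot a hN (Ideal.Quotient.mk _ p) = coordMap a N p :=
  rfl

noncomputable def invMapQuot :
    (MvPolynomial (Fin 2) k ⧸ curveIdeal a N) →ₐ[k] MvPolynomial (Fin N) k ⧸ relationIdeal a hN :=
  Ideal.Quotient.liftₐ _ (invMap a hN) fun p hp => by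
    obtain ⟨q, rfl⟩ := Ideal.mem_span_singleton'.mp hp
    rw [map_mul, invMap_iter_sub_C, mul_zero]

theorem invMapQuot_mk (p : MvPolynomial (Fin 2) k) :
    invMapQuot a hN (Ideal.Quotient.mk _ p) = invMap a hN p :=
  rfl

theorem invMapQuot_comp_coordMap :
    (invMapQuot a hN).comp (coordMap a N) = Ideal.Quotient.mkₐ k _ := by
  ext i
  rw [AlgHom.comp_apply, coordMap_X, invMapQuot_mk, invMap_iter]
  rfl

theorem coordMapQuot_comp_invMapQuot :
    (coordMapQuot a hN).comp (invMapQuot a hN) = AlgHom.id k _ := by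
  refine Ideal.Quotient.algHom_ext _ (MvPolynomial.algHom_ext (Fin.forall_fin_two.mpr ⟨?_, ?_⟩))
  · change coordMapQuot a hN (invMap a hN (X 0)) = Ideal.Quotient.mk _ (X 0)
    rw [invMap_X_zero, coordMapQuot_mk]
    exact coordMap_X a ⟨0, by omega⟩
  · change coordMapQuot a hN (invMap a hN (X 1)) = Ideal.Quotient.mk _ (X 1)
    rw [invMap_X_one, coordMapQuot_mk, coordMap_apply, Ideal.Quotient.eq]
    have heval : aeval (fun j : Fin N => iter k j) (C a - X ⟨N - 1, by omega⟩ ^ 2) - X 1 =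
        -(iter k N - C a) := by
      simp only [map_sub, map_pow, aeval_X, aeval_C, algebraMap_eq]
      rw [iter_of_one_le hN]
      ring
    rw [heval]
    exact neg_mem (Ideal.mem_span_singleton_self _)

end QuadraticPreimage

open QuadraticPreimage in
/-- For a field `k` of characteristic `≠ 2`, `a ∈ k` and `N ≥ 2`, the `k`-algebra map
`ψ* : k[z₀, …, z_{N-1}] → k[x,c]/(f_c^N(x) - a)` sending `z_i ↦ f_c^i(x)` is
surjective, with kernel generated by the polynomials
`z_{N-1}² + z_i - z_{i-1}² - a`, `i = 1, …, N-1`. -/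
theorem stmt_8 (k : Type*) [Field k] (a : k)
    (N : ℕ) (hN : 2 ≤ N) :
    let fc : ℕ → MvPolynomial (Fin 2) k :=
      fun n => (fun p => p ^ 2 + X 1)^[n] (X 0)
    let Q := MvPolynomial (Fin 2) k ⧸ Ideal.span {fc N - C a}
    let ψ : MvPolynomial (Fin N) k →ₐ[k] Q :=
      aeval (fun i : Fin N => Ideal.Quotient.mk _ (fc (i : ℕ)))
    Function.Surjective ψ ∧
      RingHom.ker ψ = Ideal.span (Set.range fun i : Fin (N - 1) =>
        (X (⟨N - 1, by omega⟩ : Fin N)) ^ 2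
          + X (⟨(i : ℕ) + 1, by have := i.isLt; omega⟩ : Fin N)
          - (X (⟨(i : ℕ), by have := i.isLt; omega⟩ : Fin N)) ^ 2
          - C a) := by
  have hN₁ : 1 ≤ N := by omega
  exact (coordMap a N).surjective_and_ker_eq_of_quotient_inverse (relationIdeal_le_ker a hN₁)
    (invMapQuot a hN₁) (invMapQuot_comp_coordMap a hN₁) (coordMapQuot_comp_invMapQuot a hN₁)
end

section
/- Let k be a field of characteristic ≠ 2, a ∈ k, N ≥ 2, and let V ⊂ ℙ^N be the projective variety cut out by the quadrics Z_{N-1}² + Z_i Z_N - Z_{i-1}² - a Z_N² = 0 for i = 1, …, N-1. Then the k̄-points of V with Z_N = 0 are exactly the 2^{N-1} points (ε₀ : ε₁ : ⋯ : ε_{N-1} : 0) with each ε_i ∈ {1, -1} and ε₀ = 1. -/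
/-!
On the hyperplane `Z_N = 0` the `i`-th quadric reduces to `Z_{i-1}² = Z_{N-1}²`, so the first `N`
coordinates all have the same square. That square is nonzero because `Z ≠ 0`, and in a domain
equal squares force `Z_j = ±Z_0`.
-/

section Signs

variable {R ι : Type*} [CommRing R]

theorem apply_ne_zero_of_sq_eq_sq [NoZeroDivisors R] {x : ι → R}
    (hsq : ∀ i j, x i ^ 2 = x j ^ 2) (hx : x ≠ 0) (i : ι) : x i ≠ 0 := by
  intro hi
  refine hx (funext fun j => ?_)
  simpa [hi] using hsq j i

theorem sq_eq_sq_and_ne_zero_iff_exists_sign_mul [NoZeroDivisors R] (x : ι → R) (i₀ : ι) :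
    ((∀ i j, x i ^ 2 = x j ^ 2) ∧ x i₀ ≠ 0) ↔
      ∃ lam : R, lam ≠ 0 ∧ ∃ ε : ι → R,
        (∀ j, ε j = 1 ∨ ε j = -1) ∧ ε i₀ = 1 ∧ ∀ j, x j = lam * ε j := by
  classical
  constructor
  · rintro ⟨hsq, hne⟩
    have hsign : ∀ j, x j = x i₀ ∨ x j = -x i₀ := fun j => sq_eq_sq_iff_eq_or_eq_neg.mp (hsq j i₀)
    refine ⟨x i₀, hne, fun j => if x j = x i₀ then 1 else -1, fun j => ?_, by simp, fun j => ?_⟩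
    · dsimp only
      split_ifs <;> simp
    · by_cases h : x j = x i₀
      · simp [h]
      · simpa [h] using (hsign j).resolve_left h
  · rintro ⟨lam, hlam, ε, hε, hε0, hx⟩
    have hsq : ∀ j, x j ^ 2 = lam ^ 2 := fun j => by
      rcases hε j with h | h <;> simp [hx j, h]
    exact ⟨fun i j => by rw [hsq, hsq], by simpa [hx i₀, hε0] using hlam⟩

end Signs

theorem Fin.init_ne_zero_of_last_eq_zero {M : Type*} [Zero M] {n : ℕ} {Z : Fin (n + 1) → M}
    (hZ : Z ≠ 0) (hlast : Z (Fin.last n) = 0) : Fin.init Z ≠ 0 := by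
  intro hinit
  refine hZ (funext fun i => ?_)
  cases i using Fin.lastCases with
  | last => exact hlast
  | cast j => exact congrFun hinit j

theorem quadrics_iff_sq_eq_sq_of_last_eq_zero {R : Type*} [CommRing R] (a : R) {N : ℕ}
    {Z : Fin (N + 1) → R} (hlast : Z (Fin.last N) = 0) :
    (∀ i : ℕ, ∀ _hi1 : 1 ≤ i, ∀ _hi2 : i ≤ N - 1,
        Z ⟨N - 1, by omega⟩ ^ 2 + Z ⟨i, by omega⟩ * Z (Fin.last N)
          - Z ⟨i - 1, by omega⟩ ^ 2 - a * Z (Fin.last N) ^ 2 = 0) ↔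
      ∀ i j : Fin N, Fin.init Z i ^ 2 = Fin.init Z j ^ 2 := by
  simp only [hlast, mul_zero, add_zero, zero_pow two_ne_zero, sub_zero, sub_eq_zero]
  constructor
  · intro h
    have hsq : ∀ j : Fin N, Fin.init Z j ^ 2 = Z ⟨N - 1, by omega⟩ ^ 2 := by
      intro j
      by_cases hj : (j : ℕ) = N - 1
      · rw [show Fin.init Z j = Z ⟨N - 1, by omega⟩ from congrArg Z (Fin.ext hj)]
      · exact (h (j + 1) (by omega) (by omega)).symm
    intro i j
    rw [hsq, hsq]
  · intro h i _ _
    exact h ⟨N - 1, by omega⟩ ⟨i - 1, by omega⟩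

/-- Let `k̄` be an algebraically closed field of characteristic `≠ 2`, `a ∈ k̄`,
`N ≥ 2`, and let `V ⊂ ℙ^N` be cut out by the quadrics
`Z_{N-1}² + Z_i Z_N - Z_{i-1}² - a Z_N² = 0` for `i = 1, …, N-1`. Then the points
of `V` (given by nonzero coordinate vectors `Z`, up to scaling) lying on the
hyperplane `Z_N = 0` are exactly the `2^{N-1}` points
`(ε₀ : ⋯ : ε_{N-1} : 0)` with each `ε_i ∈ {1, -1}` and `ε₀ = 1`. -/
theorem stmt_9 (K : Type*) [Field K]
    (a : K) (N : ℕ) (hN : 2 ≤ N) (Z : Fin (N + 1) → K) (hZ : Z ≠ 0) :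
    ((∀ i : ℕ, ∀ _hi1 : 1 ≤ i, ∀ _hi2 : i ≤ N - 1,
        Z ⟨N - 1, by omega⟩ ^ 2 + Z ⟨i, by omega⟩ * Z (Fin.last N)
          - Z ⟨i - 1, by omega⟩ ^ 2 - a * Z (Fin.last N) ^ 2 = 0) ∧
      Z (Fin.last N) = 0) ↔
    ∃ lam : K, lam ≠ 0 ∧ ∃ ε : Fin N → K,
      (∀ j : Fin N, ε j = 1 ∨ ε j = -1) ∧ ε ⟨0, by omega⟩ = 1 ∧
      (∀ j : Fin N, Z (Fin.castSucc j) = lam * ε j) ∧ Z (Fin.last N) = 0 := by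
  have signs := sq_eq_sq_and_ne_zero_iff_exists_sign_mul (Fin.init Z) ⟨0, by omega⟩
  constructor
  · rintro ⟨hquad, hlast⟩
    have hsq := (quadrics_iff_sq_eq_sq_of_last_eq_zero a hlast).mp hquad
    have hne := apply_ne_zero_of_sq_eq_sq hsq (Fin.init_ne_zero_of_last_eq_zero hZ hlast)
      ⟨0, by omega⟩
    obtain ⟨lam, hlam, ε, hε, hε0, hZε⟩ := signs.mp ⟨hsq, hne⟩
    exact ⟨lam, hlam, ε, hε, hε0, hZε, hlast⟩
  · rintro ⟨lam, hlam, ε, hε, hε0, hZε, hlast⟩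
    have hsq := (signs.mpr ⟨lam, hlam, ε, hε, hε0, hZε⟩).1
    exact ⟨(quadrics_iff_sq_eq_sq_of_last_eq_zero a hlast).mpr hsq, hlast⟩
end

section
/- The projective curve in ℙ³ defined by Z₀² = Z₂² + Z₁Z₃ and Z₁² = Z₂² + Z₂Z₃ has exactly one point with Z₂ = 0, namely (0 : 0 : 0 : 1), and after setting v = Z₀/Z₂, u = Z₁/Z₂, w = Z₃/Z₂ and eliminating w, its affine part satisfies v² = u³ - u + 1. -/
/-!
Eliminating `Z₃` between the two quadrics is linear: `Z₂` times the first equation minus `Z₁`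
times the second is the Weierstrass cubic `Z₀²Z₂ = Z₁³ - Z₁Z₂² + Z₂³`. At `Z₂ = 0` the second
quadric forces `Z₁ = 0` and then the first forces `Z₀ = 0`; where `Z₂ ≠ 0`, dividing the cubic
by `Z₂³` gives `v² = u³ - u + 1`.
-/

section PreImageCurve

variable {R : Type*} [CommRing R] {z₀ z₁ z₂ z₃ : R}

theorem weierstrass_cubic_of_quadrics (h₀ : z₀ ^ 2 = z₂ ^ 2 + z₁ * z₃)
    (h₁ : z₁ ^ 2 = z₂ ^ 2 + z₂ * z₃) :
    z₀ ^ 2 * z₂ = z₁ ^ 3 - z₁ * z₂ ^ 2 + z₂ ^ 3 := by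
  linear_combination z₂ * h₀ - z₁ * h₁

theorem eq_zero_and_eq_zero_of_quadrics [IsReduced R] (h₀ : z₀ ^ 2 = z₂ ^ 2 + z₁ * z₃)
    (h₁ : z₁ ^ 2 = z₂ ^ 2 + z₂ * z₃) (h₂ : z₂ = 0) : z₀ = 0 ∧ z₁ = 0 := by
  have hz₁ : z₁ = 0 := eq_zero_of_pow_eq_zero (n := 2) (by simp [h₁, h₂])
  exact ⟨eq_zero_of_pow_eq_zero (n := 2) (by simp [h₀, h₂, hz₁]), hz₁⟩

theorem affine_weierstrass_of_quadrics {K : Type*} [Field K] {z₀ z₁ z₂ z₃ : K}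
    (h₀ : z₀ ^ 2 = z₂ ^ 2 + z₁ * z₃) (h₁ : z₁ ^ 2 = z₂ ^ 2 + z₂ * z₃) (h₂ : z₂ ≠ 0) :
    (z₀ / z₂) ^ 2 = (z₁ / z₂) ^ 3 - z₁ / z₂ + 1 := by
  field_simp
  linear_combination weierstrass_cubic_of_quadrics h₀ h₁

end PreImageCurve

/-- The projective curve in `ℙ³` defined by `Z₀² = Z₂² + Z₁Z₃` and
`Z₁² = Z₂² + Z₂Z₃` has exactly one point with `Z₂ = 0`, namely `(0:0:0:1)`;
and on the affine part `Z₂ ≠ 0`, setting `v = Z₀/Z₂`, `u = Z₁/Z₂` one has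
`v² = u³ - u + 1`. -/
theorem stmt_11 :
    (∀ Z : Fin 4 → ℚ, Z ≠ 0 →
      Z 0 ^ 2 = Z 2 ^ 2 + Z 1 * Z 3 → Z 1 ^ 2 = Z 2 ^ 2 + Z 2 * Z 3 →
      Z 2 = 0 → Z 0 = 0 ∧ Z 1 = 0 ∧ Z 3 ≠ 0) ∧
    (∀ Z : Fin 4 → ℚ,
      Z 0 ^ 2 = Z 2 ^ 2 + Z 1 * Z 3 → Z 1 ^ 2 = Z 2 ^ 2 + Z 2 * Z 3 →
      Z 2 ≠ 0 →
      (Z 0 / Z 2) ^ 2 = (Z 1 / Z 2) ^ 3 - Z 1 / Z 2 + 1) := by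
  refine ⟨fun Z hZ h₀ h₁ h₂ => ?_, fun Z h₀ h₁ h₂ => affine_weierstrass_of_quadrics h₀ h₁ h₂⟩
  obtain ⟨hz₀, hz₁⟩ := eq_zero_and_eq_zero_of_quadrics h₀ h₁ h₂
  refine ⟨hz₀, hz₁, fun hz₃ => hZ ?_⟩
  funext i
  fin_cases i <;> assumption
end

section
/- The map σ(t, y) = ((t+1)/(t-1), 4y/(t-1)⁴) is an involution of the affine curve C: y² = (t²+1)(t⁶ + 4t⁵ + 11t⁴ - 8t³ - 5t² + 4t + 1) defined wherever t ≠ 1, i.e., if (t,y) lies on C with t ≠ 1, then σ(t,y) also lies on C, and σ(σ(t,y)) = (t,y). -/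
/-!
With `u = t - 1`, the substitution `t ↦ (t + 1)/(t - 1)` gives `t' - 1 = 2/u`, so it is an
involution of the line away from `t = 1`, and it multiplies the right-hand side `f(t)` of `C`
by `16/u⁸ = (4/u⁴)²`. Hence `y ↦ 4y/u⁴` lifts it to `C`, and applying the lift twice rescales
`y` by `(4/u⁴) · (4/(2/u)⁴) = 1`.
-/

section

variable {K : Type*} [Field K]

def curveOctic (t : K) : K :=
  (t ^ 2 + 1) * (t ^ 6 + 4 * t ^ 5 + 11 * t ^ 4 - 8 * t ^ 3 - 5 * t ^ 2 + 4 * t + 1)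

lemma mobius_sub_one {t : K} (ht : t ≠ 1) : (t + 1) / (t - 1) - 1 = 2 / (t - 1) := by
  have hu : t - 1 ≠ 0 := sub_ne_zero.mpr ht
  field_simp
  ring

lemma mobius_mobius [NeZero (2 : K)] {t : K} (ht : t ≠ 1) :
    ((t + 1) / (t - 1) + 1) / ((t + 1) / (t - 1) - 1) = t := by
  have hu : t - 1 ≠ 0 := sub_ne_zero.mpr ht
  rw [mobius_sub_one ht]
  field_simp
  ring

lemma curveOctic_mobius {t : K} (ht : t ≠ 1) :
    curveOctic ((t + 1) / (t - 1)) = 16 * curveOctic t / (t - 1) ^ 8 := by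
  have hu : t - 1 ≠ 0 := sub_ne_zero.mpr ht
  unfold curveOctic
  field_simp
  ring

lemma lift_mobius_lift [NeZero (2 : K)] {t : K} (ht : t ≠ 1) (y : K) :
    4 * (4 * y / (t - 1) ^ 4) / ((t + 1) / (t - 1) - 1) ^ 4 = y := by
  have hu : t - 1 ≠ 0 := sub_ne_zero.mpr ht
  rw [mobius_sub_one ht]
  field_simp
  ring

end

/-- The map `σ(t, y) = ((t+1)/(t-1), 4y/(t-1)⁴)` is an involution of the affine
curve `C : y² = (t²+1)(t⁶ + 4t⁵ + 11t⁴ - 8t³ - 5t² + 4t + 1)`, defined for `t ≠ 1`: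
if `(t, y)` lies on `C` with `t ≠ 1`, then `σ(t, y)` lies on `C`, and
`σ(σ(t, y)) = (t, y)`. -/
theorem stmt_18 (t y : ℚ) (ht : t ≠ 1)
    (h : y ^ 2 = (t ^ 2 + 1) * (t ^ 6 + 4 * t ^ 5 + 11 * t ^ 4 - 8 * t ^ 3
      - 5 * t ^ 2 + 4 * t + 1)) :
    let t' : ℚ := (t + 1) / (t - 1)
    let y' : ℚ := 4 * y / (t - 1) ^ 4
    y' ^ 2 = (t' ^ 2 + 1) * (t' ^ 6 + 4 * t' ^ 5 + 11 * t' ^ 4 - 8 * t' ^ 3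
        - 5 * t' ^ 2 + 4 * t' + 1) ∧
      (t' + 1) / (t' - 1) = t ∧ 4 * y' / (t' - 1) ^ 4 = y := by
  intro t' y'
  have on_curve : y' ^ 2 = curveOctic t' := by
    rw [curveOctic_mobius ht, ← show y ^ 2 = curveOctic t from h, div_pow, mul_pow]
    ring
  exact ⟨on_curve, mobius_mobius ht, lift_mobius_lift ht y⟩
end

section
/- The map (t, y) ↦ (z, w) with z = (-t² - 2t + 1)/(t² + 1) and w = (-t² + 2t + 1)y/(t² + 1)³ sends points of the affine curve y² = (t²+1)(t⁶ + 4t⁵ + 11t⁴ - 8t³ - 5t² + 4t + 1) to points of the affine curve w² = (z² - 2)(z³ - z - 1). -/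
/-- For `z = N / D` the right-hand side `(z² - 2)(z³ - z - 1)` is this polynomial over `D⁵`,
while `w² = (-t² + 2t + 1)² · D · sextic / D⁶` on the genus-3 curve. -/
theorem genus_two_rhs_homogenized_eq {R : Type*} [CommRing R] (t : R) :
    let N := -t ^ 2 - 2 * t + 1
    let D := t ^ 2 + 1
    (N ^ 2 - 2 * D ^ 2) * (N ^ 3 - N * D ^ 2 - D ^ 3) =
      (-t ^ 2 + 2 * t + 1) ^ 2 *
        (t ^ 6 + 4 * t ^ 5 + 11 * t ^ 4 - 8 * t ^ 3 - 5 * t ^ 2 + 4 * t + 1) := by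
  intro N D
  ring

/-- The map `(t, y) ↦ (z, w)` with `z = (-t² - 2t + 1)/(t² + 1)` and
`w = (-t² + 2t + 1) y/(t² + 1)³` sends points of the genus-3 curve
`y² = (t²+1)(t⁶ + 4t⁵ + 11t⁴ - 8t³ - 5t² + 4t + 1)` to points of the genus-2
curve `w² = (z² - 2)(z³ - z - 1)`. -/
theorem stmt_19 (t y : ℚ)
    (h : y ^ 2 = (t ^ 2 + 1) * (t ^ 6 + 4 * t ^ 5 + 11 * t ^ 4 - 8 * t ^ 3
      - 5 * t ^ 2 + 4 * t + 1)) :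
    let z : ℚ := (-t ^ 2 - 2 * t + 1) / (t ^ 2 + 1)
    let w : ℚ := (-t ^ 2 + 2 * t + 1) * y / (t ^ 2 + 1) ^ 3
    w ^ 2 = (z ^ 2 - 2) * (z ^ 3 - z - 1) := by
  intro z w
  have hD : t ^ 2 + 1 ≠ 0 := by positivity
  simp only [z, w]
  field_simp
  linear_combination (-t ^ 2 + 2 * t + 1) ^ 2 * h - (t ^ 2 + 1) * genus_two_rhs_homogenized_eq t
end
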